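/- Let σ > 0 and define N_p α_p = ∫_{−∞}^∞ dx e^{−σ^{−2}x²} H_p(x) ∫_0^x du e^{(−1+σ^{−2})u²} (i.e. the μ = 0 case). Then N_{2p} α_{2p} = 0 for all p ≥ 0, and N_{2p+1} α_{2p+1} = √π 2^{2p} p! σ² (σ² − 1)^p for all p ≥ 0. -/

import Mathlib

/-!
Write `b = σ⁻²` and `F(x) = ∫₀ˣ e^{(b-1)u²} du`. Since `F` is odd and `H_{2p}` even, the even
coefficients are integrals of odd functions. For the odd ones, `2x e^{-bx²} = -(e^{-bx²})'/b`, so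
integrating `e^{-bx²} (2x H_{n+1}) F` by parts differentiates `H_{n+1} F`: the term with `H_{n+1}'`
is `2(n+1)` times the `n`-th coefficient, while the term with `F'` collapses to `∫ e^{-x²} H_{n+1}`,
which vanishes because `e^{-x²} H_{n+1} = -(e^{-x²} H_n)'`. Together with the three-term recurrence
this gives `N_{n+2} α_{n+2} = 2(n+1)(σ² - 1) N_n α_n`, and the same integration by parts with `H_0`
gives `N_1 α_1 = σ² ∫ e^{-x²} = σ² √π`.
-/

open MeasureTheory Polynomial Real

/-- The physicists' Hermite polynomials: `H_0 = 1`, `H_1 = 2X`,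
`H_{n+2} = 2X H_{n+1} - 2(n+1) H_n`. -/
noncomputable def physHermite : ℕ → Polynomial ℝ
  | 0 => 1
  | 1 => Polynomial.C 2 * Polynomial.X
  | n + 2 => Polynomial.C 2 * Polynomial.X * physHermite (n + 1)
      - Polynomial.C ((2 * (n + 1) : ℕ) : ℝ) * physHermite n

lemma physHermite_eval_neg (n : ℕ) (x : ℝ) :
    (physHermite n).eval (-x) = (-1) ^ n * (physHermite n).eval x := by
  induction n using Nat.twoStepInduction generalizing x with
  | zero => simp [physHermite]
  | one => simp [physHermite]
  | more n ih₁ ih₂ =>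
    simp only [physHermite, eval_sub, eval_mul, eval_C, eval_X, ih₁, ih₂]
    ring

lemma derivative_physHermite_succ (n : ℕ) :
    derivative (physHermite (n + 1)) = C (2 * (n + 1) : ℝ) * physHermite n := by
  induction n using Nat.twoStepInduction with
  | zero => simp [physHermite]
  | one =>
    simp only [physHermite, derivative_sub, derivative_mul, derivative_C, derivative_X,
      derivative_one]
    simp only [map_mul, map_add, map_natCast, map_ofNat, map_one]
    ring
  | more n ih₁ ih₂ =>
    have h₂ : physHermite (n + 2) = C 2 * X * physHermite (n + 1)
        - C (2 * (n + 1) : ℝ) * physHermite n := by simp [physHermite]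
    have h₃ : physHermite (n + 3) = C 2 * X * physHermite (n + 2)
        - C (2 * (n + 2) : ℝ) * physHermite (n + 1) := by
      simp only [physHermite]; push_cast; ring_nf
    rw [h₃]
    simp only [derivative_sub, derivative_mul, derivative_C, derivative_X, ih₁, ih₂] at h₂ ⊢
    simp only [map_mul, map_add, map_natCast, map_ofNat, map_one, Nat.cast_add] at h₂ ⊢
    linear_combination -(2 * ((n : ℝ[X]) + 2)) * h₂

lemma physHermite_succ_eq_sub_derivative (n : ℕ) :
    physHermite (n + 1) = C 2 * X * physHermite n - derivative (physHermite n) := by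
  cases n with
  | zero => simp [physHermite]
  | succ n =>
    rw [derivative_physHermite_succ]
    simp [physHermite]

lemma integrable_exp_neg_mul_sq_mul_eval {b : ℝ} (hb : 0 < b) (P : ℝ[X]) :
    Integrable fun x : ℝ => exp (-b * x ^ 2) * P.eval x := by
  have hmonomial (i : ℕ) : Integrable fun x : ℝ => exp (-b * x ^ 2) * x ^ i := by
    simpa [Real.rpow_natCast, mul_comm] using
      integrable_rpow_mul_exp_neg_mul_sq hb (s := i) (by linarith [i.cast_nonneg (α := ℝ)])
  simp_rw [eval_eq_sum_range, Finset.mul_sum]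
  refine integrable_finsetSum _ fun i _ => ?_
  simpa [mul_left_comm] using (hmonomial i).const_mul (P.coeff i)

lemma integral_exp_neg_sq_mul_eval_physHermite_succ (n : ℕ) :
    ∫ x : ℝ, exp (-1 * x ^ 2) * (physHermite (n + 1)).eval x = 0 := by
  have hderiv (x : ℝ) : HasDerivAt (fun y => -(exp (-1 * y ^ 2) * (physHermite n).eval y))
      (exp (-1 * x ^ 2) * (physHermite (n + 1)).eval x) x := by
    have hexp : HasDerivAt (fun y : ℝ => exp (-1 * y ^ 2)) (exp (-1 * x ^ 2) * (-1 * (2 * x))) x :=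
      by simpa using ((hasDerivAt_pow 2 x).const_mul (-1 : ℝ)).exp
    refine (hexp.mul ((physHermite n).hasDerivAt x)).neg.congr_deriv ?_
    rw [physHermite_succ_eq_sub_derivative]
    simp only [eval_sub, eval_mul, eval_C, eval_X]
    ring
  exact integral_eq_zero_of_hasDerivAt_of_integrable hderiv
    (integrable_exp_neg_mul_sq_mul_eval one_pos _)
    (integrable_exp_neg_mul_sq_mul_eval one_pos _).neg

theorem integral_two_mul_mul_exp_neg_mul_sq_mul {b : ℝ} (hb : b ≠ 0) {g g' : ℝ → ℝ}
    (hg : ∀ x, HasDerivAt g (g' x) x)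
    (hint : Integrable fun x => x * exp (-b * x ^ 2) * g x)
    (hint' : Integrable fun x => exp (-b * x ^ 2) * g' x)
    (hint₀ : Integrable fun x => exp (-b * x ^ 2) * g x) :
    ∫ x, 2 * x * exp (-b * x ^ 2) * g x = b⁻¹ * ∫ x, exp (-b * x ^ 2) * g' x := by
  have hexp (x : ℝ) : HasDerivAt (fun y : ℝ => exp (-b * y ^ 2))
      (-(2 * b) * (x * exp (-b * x ^ 2))) x := by
    refine ((hasDerivAt_pow 2 x).const_mul (-b)).exp.congr_deriv ?_
    simp only [Nat.cast_ofNat]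
    ring
  have hparts := integral_mul_deriv_eq_deriv_mul_of_integrable (fun x _ => hexp x)
    (fun x _ => hg x) hint' ((hint.const_mul (-(2 * b))).congr (by
      filter_upwards with x; simp only [Pi.mul_apply]; ring)) hint₀
  simp only [mul_assoc, integral_const_mul] at hparts ⊢
  rw [hparts]
  generalize ∫ x, x * (exp (-b * x ^ 2) * g x) = I
  field_simp

noncomputable def expSqPrimitive (c x : ℝ) : ℝ := ∫ u in (0 : ℝ)..x, exp (c * u ^ 2)

section ExpSqPrimitive

variable (c : ℝ)

lemma hasDerivAt_expSqPrimitive (x : ℝ) :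
    HasDerivAt (expSqPrimitive c) (exp (c * x ^ 2)) x := by
  have hcont : Continuous fun u : ℝ => exp (c * u ^ 2) := by fun_prop
  exact intervalIntegral.integral_hasDerivAt_right (hcont.intervalIntegrable 0 x)
    (hcont.stronglyMeasurableAtFilter _ _) hcont.continuousAt

lemma continuous_expSqPrimitive : Continuous (expSqPrimitive c) :=
  continuous_iff_continuousAt.2 fun x => (hasDerivAt_expSqPrimitive c x).continuousAt

lemma expSqPrimitive_neg (x : ℝ) : expSqPrimitive c (-x) = -expSqPrimitive c x := by
  have h := intervalIntegral.integral_comp_neg (a := 0) (b := x) fun u => exp (c * u ^ 2)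
  simp only [neg_sq, neg_zero] at h
  rw [expSqPrimitive, expSqPrimitive, intervalIntegral.integral_symm, ← h]

lemma abs_expSqPrimitive_le (x : ℝ) : |expSqPrimitive c x| ≤ |x| * exp (max c 0 * x ^ 2) := by
  have hbound : ∀ u ∈ Set.uIoc 0 x, ‖exp (c * u ^ 2)‖ ≤ exp (max c 0 * x ^ 2) := by
    intro u hu
    have hux : u ^ 2 ≤ x ^ 2 := by
      rcases Set.mem_uIoc.mp hu with ⟨h₁, h₂⟩ | ⟨h₁, h₂⟩ <;> nlinarith
    rw [norm_of_nonneg (exp_pos _).le, exp_le_exp]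
    calc c * u ^ 2 ≤ max c 0 * u ^ 2 := by gcongr; exact le_max_left c 0
      _ ≤ max c 0 * x ^ 2 := by gcongr
  simpa [expSqPrimitive, mul_comm] using intervalIntegral.norm_integral_le_of_norm_le_const hbound

end ExpSqPrimitive

lemma integrable_exp_neg_mul_sq_mul_eval_mul_expSqPrimitive {b c : ℝ} (hb : 0 < b) (hc : c < b)
    (P : ℝ[X]) :
    Integrable fun x => exp (-b * x ^ 2) * P.eval x * expSqPrimitive c x := by
  have hcont : Continuous fun x => exp (-b * x ^ 2) * P.eval x * expSqPrimitive c x := by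
    have := continuous_expSqPrimitive c
    have := P.continuous
    fun_prop
  refine (integrable_exp_neg_mul_sq_mul_eval (sub_pos.2 (max_lt hc hb)) (P * X)).mono
    hcont.aestronglyMeasurable (Filter.Eventually.of_forall fun x => ?_)
  simp only [norm_mul, norm_of_nonneg (exp_pos _).le, norm_eq_abs, eval_mul, eval_X]
  calc exp (-b * x ^ 2) * |P.eval x| * |expSqPrimitive c x|
      ≤ exp (-b * x ^ 2) * |P.eval x| * (|x| * exp (max c 0 * x ^ 2)) := by
        gcongr; exact abs_expSqPrimitive_le c x
    _ = exp (-(b - max c 0) * x ^ 2) * (|P.eval x| * |x|) := by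
        rw [show -(b - max c 0) * x ^ 2 = -b * x ^ 2 + max c 0 * x ^ 2 by ring, exp_add]
        ring

/-- `primitiveMoment σ⁻² (σ⁻² - 1) (H_p)` is the paper's `N_p α_p`. -/
noncomputable def primitiveMoment (b c : ℝ) (P : ℝ[X]) : ℝ :=
  ∫ x, exp (-b * x ^ 2) * P.eval x * expSqPrimitive c x

section PrimitiveMoment

variable {b c : ℝ}

lemma primitiveMoment_C_mul (a : ℝ) (P : ℝ[X]) :
    primitiveMoment b c (C a * P) = a * primitiveMoment b c P := by
  rw [primitiveMoment, primitiveMoment, ← integral_const_mul]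
  congr 1 with x
  simp only [eval_mul, eval_C]
  ring

lemma primitiveMoment_sub (hb : 0 < b) (hc : c < b) (P Q : ℝ[X]) :
    primitiveMoment b c (P - Q) = primitiveMoment b c P - primitiveMoment b c Q := by
  rw [primitiveMoment, primitiveMoment, primitiveMoment, ← integral_sub
    (integrable_exp_neg_mul_sq_mul_eval_mul_expSqPrimitive hb hc P)
    (integrable_exp_neg_mul_sq_mul_eval_mul_expSqPrimitive hb hc Q)]
  congr 1 with x
  simp only [eval_sub]
  ring

lemma primitiveMoment_C_two_mul_X_mul (hb : 0 < b) (hc : c < b) (P : ℝ[X]) :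
    primitiveMoment b c (C 2 * X * P) = b⁻¹ * (primitiveMoment b c (derivative P)
      + ∫ x, exp (-(b - c) * x ^ 2) * P.eval x) := by
  have hexp (x : ℝ) : exp (-b * x ^ 2) * exp (c * x ^ 2) = exp (-(b - c) * x ^ 2) := by
    rw [← exp_add]; ring_nf
  have hg (x : ℝ) : HasDerivAt (fun y => P.eval y * expSqPrimitive c y)
      ((derivative P).eval x * expSqPrimitive c x + P.eval x * exp (c * x ^ 2)) x :=
    (P.hasDerivAt x).mul (hasDerivAt_expSqPrimitive c x)
  have hint := integrable_exp_neg_mul_sq_mul_eval_mul_expSqPrimitive hb hc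
  have hint' := (hint (derivative P)).add
    (integrable_exp_neg_mul_sq_mul_eval (sub_pos.2 hc) P)
  have hparts := integral_two_mul_mul_exp_neg_mul_sq_mul hb.ne' hg
    ((hint (X * P)).congr (by filter_upwards with x; simp only [eval_mul, eval_X]; ring))
    (hint'.congr (by filter_upwards with x; simp only [Pi.add_apply, ← hexp]; ring))
    ((hint P).congr (by filter_upwards with x; ring))
  calc primitiveMoment b c (C 2 * X * P)
      = ∫ x, 2 * x * exp (-b * x ^ 2) * (P.eval x * expSqPrimitive c x) := by
        rw [primitiveMoment]
        congr 1 with x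
        simp only [eval_mul, eval_C, eval_X]
        ring
    _ = _ := by
        rw [hparts, primitiveMoment, ← integral_add (hint _)
          (integrable_exp_neg_mul_sq_mul_eval (sub_pos.2 hc) P)]
        congr 2 with x
        rw [← hexp]
        ring

lemma primitiveMoment_physHermite_add_two (hb : 0 < b) (n : ℕ) :
    primitiveMoment b (-1 + b) (physHermite (n + 2))
      = 2 * (n + 1) * (b⁻¹ - 1) * primitiveMoment b (-1 + b) (physHermite n) := by
  have hc : -1 + b < b := by linarith
  have hrec : physHermite (n + 2)
      = C 2 * X * physHermite (n + 1) - C (2 * (n + 1) : ℝ) * physHermite n := by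
    simp [physHermite]
  rw [hrec, primitiveMoment_sub hb hc, primitiveMoment_C_two_mul_X_mul hb hc,
    derivative_physHermite_succ, primitiveMoment_C_mul,
    show b - (-1 + b) = 1 by ring, integral_exp_neg_sq_mul_eval_physHermite_succ]
  ring

lemma primitiveMoment_physHermite_one (hb : 0 < b) :
    primitiveMoment b (-1 + b) (physHermite 1) = b⁻¹ * √π := by
  have hc : -1 + b < b := by linarith
  rw [show physHermite 1 = C 2 * X * 1 by simp [physHermite],
    primitiveMoment_C_two_mul_X_mul hb hc, derivative_one, show b - (-1 + b) = 1 by ring]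
  simp only [primitiveMoment, eval_zero, eval_one, mul_zero, zero_mul, mul_one, integral_zero,
    zero_add, integral_gaussian, div_one]

end PrimitiveMoment

lemma integral_eq_zero_of_odd {f : ℝ → ℝ} (hf : Function.Odd f) : ∫ x, f x = 0 := by
  have h := integral_neg_eq_self f volume
  simp only [hf _, integral_neg] at h
  linarith

lemma primitiveMoment_eq_zero_of_even (b c : ℝ) {P : ℝ[X]} (hP : ∀ x, P.eval (-x) = P.eval x) :
    primitiveMoment b c P = 0 :=
  integral_eq_zero_of_odd fun x => by simp only [neg_sq, hP, expSqPrimitive_neg]; ring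

theorem alpha_coefficients_mu_zero_general
    (σ : ℝ) (hσ0 : 0 < σ) (p : ℕ) :
    (∫ x : ℝ, Real.exp (-(σ ^ 2)⁻¹ * x ^ 2) * (physHermite (2 * p)).eval x *
        ∫ u in (0 : ℝ)..x, Real.exp ((-1 + (σ ^ 2)⁻¹) * u ^ 2)) = 0
    ∧
    (∫ x : ℝ, Real.exp (-(σ ^ 2)⁻¹ * x ^ 2) * (physHermite (2 * p + 1)).eval x *
        ∫ u in (0 : ℝ)..x, Real.exp ((-1 + (σ ^ 2)⁻¹) * u ^ 2))
      = Real.sqrt Real.pi * 2 ^ (2 * p) * (p.factorial : ℝ) * σ ^ 2 *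
          (σ ^ 2 - 1) ^ p := by
  have hb : 0 < (σ ^ 2)⁻¹ := by positivity
  refine ⟨primitiveMoment_eq_zero_of_even _ _ fun x => by simp [physHermite_eval_neg, pow_mul], ?_⟩
  change primitiveMoment (σ ^ 2)⁻¹ (-1 + (σ ^ 2)⁻¹) (physHermite (2 * p + 1)) = _
  induction p with
  | zero =>
    rw [primitiveMoment_physHermite_one hb, inv_inv]
    simp only [mul_zero, pow_zero, Nat.factorial_zero, Nat.cast_one]
    ring
  | succ q ih =>
    rw [show 2 * (q + 1) + 1 = 2 * q + 1 + 2 by ring, primitiveMoment_physHermite_add_two hb, ih,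
      inv_inv, Nat.factorial_succ]
    push_cast
    ring

/-- For `μ = 0` the coefficients
`N_p α_p = ∫ e^{-x²/σ²} H_p(x) (∫_0^x e^{(-1+σ⁻²)u²} du) dx` satisfy
`N_{2p} α_{2p} = 0` and `N_{2p+1} α_{2p+1} = √π 2^{2p} p! σ² (σ²-1)^p`. -/
theorem alpha_coefficients_mu_zero
    (σ : ℝ) (hσ0 : 0 < σ) (hσ2 : σ ^ 2 < 2) (p : ℕ) :
    (∫ x : ℝ, Real.exp (-(σ ^ 2)⁻¹ * x ^ 2) * (physHermite (2 * p)).eval x *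
        ∫ u in (0 : ℝ)..x, Real.exp ((-1 + (σ ^ 2)⁻¹) * u ^ 2)) = 0
    ∧
    (∫ x : ℝ, Real.exp (-(σ ^ 2)⁻¹ * x ^ 2) * (physHermite (2 * p + 1)).eval x *
        ∫ u in (0 : ℝ)..x, Real.exp ((-1 + (σ ^ 2)⁻¹) * u ^ 2))
      = Real.sqrt Real.pi * 2 ^ (2 * p) * (p.factorial : ℝ) * σ ^ 2 *
          (σ ^ 2 - 1) ^ p :=
  alpha_coefficients_mu_zero_general σ hσ0 p
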